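/- arXiv:1012.4615 — 6 statements merged into one kernel-verified Lean document; each statement's English description precedes it below -/
import Mathlib

section
/- The determinant of the square confluent (generalized Vandermonde) matrix $V(\overline{A})$ associated to $\overline{A}=((\alpha_1,d_1);\ldots;(\alpha_m,d_m))$ with $d_1+\cdots+d_m=d$ equals $\prod_{1\le i<j\le m}(\alpha_j-\alpha_i)^{d_i d_j}$. -/
open Finset

/-- Entry helper for the confluent Vandermonde matrix: `binom(k,j) * a^(k-j)`,
with the convention that it is `0` when `k < j`. -/
def dcoef {K : Type*} [CommRing K] (k j : ℕ) (a : K) : K :=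
  if j ≤ k then (k.choose j : K) * a ^ (k - j) else 0

/-- The position in `Fin (∑ i, d i)` of the `j`-th column of the `i`-th block. -/
def sigmaToFin {m : ℕ} (d : Fin m → ℕ) (p : Σ i, Fin (d i)) : Fin (∑ i, d i) :=
  ⟨∑ i ∈ Finset.univ.filter (fun i => i < p.1), d i + (p.2 : ℕ), by
    have h1 : (p.2 : ℕ) < d p.1 := p.2.isLt
    have h2 : d p.1 + ∑ i ∈ Finset.univ.filter (fun i => i < p.1), d i ≤ ∑ i, d i := by
      rw [← Finset.sum_insert (by simp)]
      exact Finset.sum_le_sum_of_subset (Finset.subset_univ _)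
    omega⟩

/-- The square confluent (generalized Vandermonde) matrix associated to points
`α i` with multiplicities `d i`: the row `k`, column `(i,j)` entry is
`binom(k,j) * (α i)^(k-j)`, blocks ordered by `i`. -/
def confVdm {K : Type*} [CommRing K] {m : ℕ} (α : Fin m → K) (d : Fin m → ℕ) :
    Matrix (Fin (∑ i, d i)) (Fin (∑ i, d i)) K :=
  Matrix.of fun k c =>
    ∑ p : Σ i, Fin (d i),
      if (sigmaToFin d p : ℕ) = (c : ℕ) then dcoef (k : ℕ) (p.2 : ℕ) (α p.1) else 0

namespace ConfVdmAux

open Polynomial Matrix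

variable {K : Type*} [CommRing K] {m : ℕ}

/-! ### The sigma indexing equivalence -/

lemma off_add_le (d : Fin m → ℕ) {i j : Fin m} (h : i < j) :
    (∑ l ∈ univ.filter (fun l => l < i), d l) + d i ≤ ∑ l ∈ univ.filter (fun l => l < j), d l := by
  have hsub : insert i (univ.filter (fun l => l < i)) ⊆ univ.filter (fun l => l < j) := by
    intro l hl
    simp only [mem_insert, mem_filter, mem_univ, true_and] at hl ⊢
    rcases hl with rfl | hl
    · exact h
    · exact hl.trans h
  rw [add_comm, ← Finset.sum_insert (by simp)]
  exact Finset.sum_le_sum_of_subset hsub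

lemma sigmaToFin_injective (d : Fin m → ℕ) : Function.Injective (sigmaToFin d) := by
  intro p q hpq
  have h := congrArg Fin.val hpq
  simp only [sigmaToFin] at h
  rcases lt_trichotomy p.1 q.1 with h1 | h1 | h1
  · have h2 := off_add_le d h1
    have := p.2.isLt
    omega
  · obtain ⟨i, a⟩ := p; obtain ⟨j, b⟩ := q
    simp only at h1
    subst h1
    simp only at h
    have : (a : ℕ) = b := by omega
    exact congrArg _ (Fin.ext this)
  · have h2 := off_add_le d h1
    have := q.2.isLt
    omega

noncomputable def sigmaEquiv (d : Fin m → ℕ) : (Σ i, Fin (d i)) ≃ Fin (∑ i, d i) :=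
  Equiv.ofBijective (sigmaToFin d)
    ((Fintype.bijective_iff_injective_and_card _).2 ⟨sigmaToFin_injective d, by simp⟩)

@[simp] lemma sigmaEquiv_apply (d : Fin m → ℕ) (p : Σ i, Fin (d i)) :
    sigmaEquiv d p = sigmaToFin d p := rfl

/-- The equivalence between `Fin (d i)` and the fiber of `Sigma.fst` over `i`. -/
def blkEquiv (d : Fin m → ℕ) (i : Fin m) : Fin (d i) ≃ {p : Σ i, Fin (d i) // p.1 = i} where
  toFun j := ⟨⟨i, j⟩, rfl⟩
  invFun p := p.2 ▸ p.1.2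
  left_inv j := rfl
  right_inv := by rintro ⟨⟨i', j⟩, rfl⟩; rfl

/-! ### Taylor expansion lemmas -/

lemma taylor_factor (a : K) (n : ℕ) (h : K[X]) :
    (taylor a) ((X - C a) ^ n * h) = X ^ n * (taylor a) h := by
  calc (taylor a) ((X - C a) ^ n * h) = (taylorAlgHom a) ((X - C a) ^ n * h) := rfl
    _ = ((taylorAlgHom a) (X - C a)) ^ n * (taylorAlgHom a) h := by
        rw [_root_.map_mul, _root_.map_pow]
    _ = X ^ n * (taylor a) h := by
        have : (taylorAlgHom a) (X - C a) = X := by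
          show (taylor a) (X - C a) = X
          rw [_root_.map_sub, taylor_X, taylor_C]; ring
        rw [this]; rfl

lemma coeff_taylor_factor_lt (a : K) {n j : ℕ} (h : K[X]) (hj : j < n) :
    ((taylor a) ((X - C a) ^ n * h)).coeff j = 0 := by
  rw [taylor_factor, coeff_X_pow_mul']
  simp [Nat.not_le.mpr hj]

lemma coeff_taylor_factor_self (a : K) (n : ℕ) (h : K[X]) :
    ((taylor a) ((X - C a) ^ n * h)).coeff n = h.eval a := by
  rw [taylor_factor]
  have := coeff_X_pow_mul ((taylor a) h) n 0
  rw [zero_add] at this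
  rw [this, taylor_coeff_zero]

lemma eval_hasseDeriv_sum (f : K[X]) (D : ℕ) (hf : f.natDegree < D) (j : ℕ) (a : K) :
    (Polynomial.hasseDeriv j f).eval a = ∑ k ∈ Finset.range D, f.coeff k * dcoef k j a := by
  conv_lhs => rw [Polynomial.as_sum_range' f D hf]
  rw [map_sum, eval_finset_sum]
  refine Finset.sum_congr rfl fun k _ => ?_
  rw [hasseDeriv_monomial, eval_monomial, dcoef]
  split_ifs with h
  · ring
  · simp [Nat.choose_eq_zero_of_lt (Nat.not_le.mp h)]

/-! ### The adapted polynomial basis -/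

noncomputable def gP (α : Fin m → K) (d : Fin m → ℕ) (i : Fin m) : K[X] :=
  ∏ l ∈ univ.filter (fun l => l < i), (X - C (α l)) ^ (d l)

lemma monic_gP (α : Fin m → K) (d : Fin m → ℕ) (i : Fin m) : (gP α d i).Monic :=
  monic_prod_of_monic _ _ fun l _ => (monic_X_sub_C (α l)).pow (d l)

lemma natDegree_gP [Nontrivial K] (α : Fin m → K) (d : Fin m → ℕ) (i : Fin m) :
    (gP α d i).natDegree = ∑ l ∈ univ.filter (fun l => l < i), d l := by
  rw [gP, natDegree_prod_of_monic _ _ fun l _ => (monic_X_sub_C (α l)).pow (d l)]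
  refine Finset.sum_congr rfl fun l _ => ?_
  rw [(monic_X_sub_C (α l)).natDegree_pow, natDegree_X_sub_C, mul_one]

noncomputable def PP (α : Fin m → K) (d : Fin m → ℕ) (p : Σ i, Fin (d i)) : K[X] :=
  (X - C (α p.1)) ^ (p.2 : ℕ) * gP α d p.1

lemma monic_PP (α : Fin m → K) (d : Fin m → ℕ) (p : Σ i, Fin (d i)) : (PP α d p).Monic :=
  ((monic_X_sub_C (α p.1)).pow _).mul (monic_gP α d p.1)

lemma natDegree_PP [Nontrivial K] (α : Fin m → K) (d : Fin m → ℕ) (p : Σ i, Fin (d i)) :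
    (PP α d p).natDegree = (sigmaToFin d p : ℕ) := by
  rw [PP, ((monic_X_sub_C (α p.1)).pow _).natDegree_mul (monic_gP α d p.1),
    (monic_X_sub_C (α p.1)).natDegree_pow, natDegree_X_sub_C, mul_one, natDegree_gP]
  simp [sigmaToFin, add_comm]

/-! ### The three matrices -/

noncomputable def Wm (α : Fin m → K) (d : Fin m → ℕ) :
    Matrix (Σ i, Fin (d i)) (Σ i, Fin (d i)) K :=
  fun p q => dcoef (sigmaToFin d p : ℕ) (q.2 : ℕ) (α q.1)

noncomputable def Um (α : Fin m → K) (d : Fin m → ℕ) :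
    Matrix (Σ i, Fin (d i)) (Σ i, Fin (d i)) K :=
  fun p r => (PP α d p).coeff (sigmaToFin d r : ℕ)

noncomputable def Mm (α : Fin m → K) (d : Fin m → ℕ) :
    Matrix (Σ i, Fin (d i)) (Σ i, Fin (d i)) K :=
  fun p q => ((taylor (α q.1)) (PP α d p)).coeff (q.2 : ℕ)

lemma confVdm_eq (α : Fin m → K) (d : Fin m → ℕ) :
    confVdm α d = (Wm α d).submatrix (sigmaEquiv d).symm (sigmaEquiv d).symm := by
  ext k c
  have key : ∀ p : Σ i, Fin (d i),
      ((sigmaToFin d p : ℕ) = (c : ℕ)) ↔ (p = (sigmaEquiv d).symm c) := by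
    intro p
    constructor
    · intro h
      have h2 : sigmaEquiv d p = c := Fin.ext h
      rw [← h2, Equiv.symm_apply_apply]
    · rintro rfl
      exact congrArg Fin.val ((sigmaEquiv d).apply_symm_apply c)
  calc confVdm α d k c
      = ∑ p : Σ i, Fin (d i),
          if p = (sigmaEquiv d).symm c then dcoef (k : ℕ) (p.2 : ℕ) (α p.1) else 0 :=
        Finset.sum_congr rfl fun p _ => if_congr (key p) rfl rfl
    _ = dcoef (k : ℕ) ((((sigmaEquiv d).symm c)).2 : ℕ) (α (((sigmaEquiv d).symm c)).1) := by
        simp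
    _ = (Wm α d).submatrix (sigmaEquiv d).symm (sigmaEquiv d).symm k c := by
        simp only [Matrix.submatrix_apply, Wm]
        congr 1
        exact (congrArg Fin.val ((sigmaEquiv d).apply_symm_apply k)).symm

lemma mul_eq [Nontrivial K] (α : Fin m → K) (d : Fin m → ℕ) :
    Um α d * Wm α d = Mm α d := by
  ext p q
  have hf : (PP α d p).natDegree < ∑ i, d i := by
    rw [natDegree_PP]; exact (sigmaToFin d p).isLt
  calc (Um α d * Wm α d) p q
      = ∑ r : Σ i, Fin (d i),
          (PP α d p).coeff (sigmaToFin d r : ℕ) * dcoef (sigmaToFin d r : ℕ) (q.2 : ℕ) (α q.1) := by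
        rw [Matrix.mul_apply]; rfl
    _ = ∑ k : Fin (∑ i, d i), (PP α d p).coeff (k : ℕ) * dcoef (k : ℕ) (q.2 : ℕ) (α q.1) :=
        Fintype.sum_bijective (sigmaEquiv d) (sigmaEquiv d).bijective _ _ (fun r => rfl)
    _ = ∑ k ∈ Finset.range (∑ i, d i), (PP α d p).coeff k * dcoef k (q.2 : ℕ) (α q.1) :=
        Fin.sum_univ_eq_sum_range (fun k => (PP α d p).coeff k * dcoef k (q.2 : ℕ) (α q.1)) _
    _ = (Polynomial.hasseDeriv (q.2 : ℕ) (PP α d p)).eval (α q.1) :=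
        (eval_hasseDeriv_sum _ _ hf _ _).symm
    _ = Mm α d p q := by
        show _ = ((taylor (α q.1)) (PP α d p)).coeff (q.2 : ℕ)
        rw [taylor_coeff]

lemma det_Um [Nontrivial K] (α : Fin m → K) (d : Fin m → ℕ) : (Um α d).det = 1 := by
  rw [← Matrix.det_submatrix_equiv_self (sigmaEquiv d).symm (Um α d)]
  set U' := (Um α d).submatrix (sigmaEquiv d).symm (sigmaEquiv d).symm with hU'
  have hdeg : ∀ k, (PP α d ((sigmaEquiv d).symm k)).natDegree = (k : ℕ) := by
    intro k
    rw [natDegree_PP]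
    exact congrArg Fin.val ((sigmaEquiv d).apply_symm_apply k)
  have htri : U'.BlockTriangular OrderDual.toDual := by
    intro k l h
    have hkl : (k : ℕ) < (l : ℕ) := h
    show (PP α d ((sigmaEquiv d).symm k)).coeff (sigmaToFin d ((sigmaEquiv d).symm l) : ℕ) = 0
    have hl : (sigmaToFin d ((sigmaEquiv d).symm l) : ℕ) = (l : ℕ) :=
      congrArg Fin.val ((sigmaEquiv d).apply_symm_apply l)
    rw [hl]
    exact Polynomial.coeff_eq_zero_of_natDegree_lt (by rw [hdeg]; exact hkl)
  rw [Matrix.det_of_lowerTriangular _ htri]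
  refine Finset.prod_eq_one fun k _ => ?_
  show (PP α d ((sigmaEquiv d).symm k)).coeff (sigmaToFin d ((sigmaEquiv d).symm k) : ℕ) = 1
  have hl : (sigmaToFin d ((sigmaEquiv d).symm k) : ℕ) = (k : ℕ) :=
    congrArg Fin.val ((sigmaEquiv d).apply_symm_apply k)
  rw [hl, ← hdeg k]
  exact (monic_PP α d _).coeff_natDegree

lemma Mm_blockTriangular (α : Fin m → K) (d : Fin m → ℕ) :
    (Mm α d).BlockTriangular Sigma.fst := by
  intro p q h
  have hq : q.1 ∈ univ.filter (fun l => l < p.1) := by simp [h]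
  have hfac : PP α d p = (X - C (α q.1)) ^ (d q.1) *
      ((X - C (α p.1)) ^ (p.2 : ℕ) *
        ∏ l ∈ (univ.filter (fun l => l < p.1)).erase q.1, (X - C (α l)) ^ (d l)) := by
    rw [PP, gP, ← Finset.mul_prod_erase _ _ hq]; ring
  show ((taylor (α q.1)) (PP α d p)).coeff (q.2 : ℕ) = 0
  rw [hfac]
  exact coeff_taylor_factor_lt _ _ q.2.isLt

lemma det_Mm_block (α : Fin m → K) (d : Fin m → ℕ) (i : Fin m) :
    ((Mm α d).toSquareBlock Sigma.fst i).det = ((gP α d i).eval (α i)) ^ (d i) := by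
  rw [← Matrix.det_submatrix_equiv_self (blkEquiv d i) ((Mm α d).toSquareBlock Sigma.fst i)]
  set B := ((Mm α d).toSquareBlock Sigma.fst i).submatrix (blkEquiv d i) (blkEquiv d i) with hB
  have hBapp : ∀ j j' : Fin (d i), B j j' = Mm α d ⟨i, j⟩ ⟨i, j'⟩ := fun j j' => rfl
  have htri : B.BlockTriangular id := by
    intro j j' h
    rw [hBapp]
    show ((taylor (α i)) (PP α d ⟨i, j⟩)).coeff (j' : ℕ) = 0
    exact coeff_taylor_factor_lt _ _ h
  rw [Matrix.det_of_upperTriangular htri]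
  have hdiag : ∀ j : Fin (d i), B j j = (gP α d i).eval (α i) := by
    intro j
    rw [hBapp]
    exact coeff_taylor_factor_self _ _ _
  rw [Finset.prod_congr rfl fun j _ => hdiag j, Finset.prod_const, Finset.card_univ,
    Fintype.card_fin]

lemma prod_swap_Iio (f : Fin m → Fin m → K) :
    ∏ j : Fin m, ∏ i ∈ Iio j, f i j = ∏ i : Fin m, ∏ j ∈ Ioi i, f i j := by
  rw [Finset.prod_sigma', Finset.prod_sigma']
  refine Finset.prod_nbij' (fun x => ⟨x.2, x.1⟩) (fun x => ⟨x.2, x.1⟩) ?_ ?_ ?_ ?_ ?_ <;>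
    simp [Finset.mem_sigma]

end ConfVdmAux

open ConfVdmAux Polynomial Matrix in
theorem det_confVdm {K : Type*} [CommRing K] {m : ℕ} (α : Fin m → K) (d : Fin m → ℕ) :
    (confVdm α d).det = ∏ i, ∏ j ∈ Finset.Ioi i, (α j - α i) ^ (d i * d j) := by
  rcases subsingleton_or_nontrivial K with hK | hK
  · exact Subsingleton.elim _ _
  have h1 : (confVdm α d).det = (Wm α d).det := by
    rw [confVdm_eq α d, Matrix.det_submatrix_equiv_self]
  have h2 : (Wm α d).det = (Mm α d).det := by
    rw [← mul_eq α d, Matrix.det_mul, det_Um, one_mul]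
  rw [h1, h2, (Mm_blockTriangular α d).det_fintype]
  have h3 : ∀ i : Fin m, ((Mm α d).toSquareBlock Sigma.fst i).det
      = ∏ l ∈ Iio i, (α i - α l) ^ (d l * d i) := by
    intro i
    rw [det_Mm_block]
    have : (gP α d i).eval (α i) = ∏ l ∈ Iio i, (α i - α l) ^ (d l) := by
      rw [gP]
      rw [Polynomial.eval_prod]
      refine Finset.prod_congr (by ext l; simp) fun l _ => ?_
      simp
    rw [this, ← Finset.prod_pow]
    exact Finset.prod_congr rfl fun l _ => by rw [← pow_mul]
  rw [Finset.prod_congr rfl fun i _ => h3 i]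
  exact prod_swap_Iio (fun i j => (α j - α i) ^ (d i * d j))
end

section
/- For a polynomial $h$ and $\overline{A}=((\alpha_1,d_1);\ldots;(\alpha_m,d_m))$ with $d=\sum d_i$, the determinant of the square generalized Wronskian matrix $W_h(\overline{A})$ equals $\big(\prod_{1\le i<j\le m}(\alpha_j-\alpha_i)^{d_i d_j}\big)\, h(\alpha_1)^{d_1}\cdots h(\alpha_m)^{d_m}$. -/
open Finset Polynomial

/-- The square generalized Wronskian matrix `W_h(Ā)`: the row `k`, column `(i,j)`
entry is `(1/j!) * (z^k h(z))^{(j)}` evaluated at `z = α i`, blocks ordered by `i`. -/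
noncomputable def confWronskian {K : Type*} [Field K] (h : Polynomial K) {m : ℕ}
    (α : Fin m → K) (d : Fin m → ℕ) :
    Matrix (Fin (∑ i, d i)) (Fin (∑ i, d i)) K :=
  Matrix.of fun k c =>
    ∑ p : Σ i, Fin (d i),
      if (sigmaToFin d p : ℕ) = (c : ℕ) then
        (((p.2 : ℕ).factorial : K))⁻¹ *
          Polynomial.eval (α p.1) (Polynomial.derivative^[(p.2 : ℕ)] (X ^ (k : ℕ) * h))
      else 0

/-!
The entries of `W_h(Ā)` are Taylor coefficients: `(1/j!) (z^k h)^{(j)}(α_i)` is the `j`-th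
coefficient of `X^k h` expanded at `α_i`. Replacing the row polynomials `X^k` by any monic
polynomials `g_k` of degree `k` is a unitriangular row operation, so it does not change the
determinant. For the rows choose `(X - α_1)^j` (`j < d_1`) followed by `X^k (X - α_1)^{d_1}`:
the latter vanish to order `d_1` at `α_1`, so the matrix becomes block upper triangular. The
first diagonal block is triangular with diagonal entries `h(α_1)`, and the second is the
Wronskian of `(X - α_1)^{d_1} h` at the remaining points, which is handled by induction on `m`.
-/

section Indexing

theorem sigmaToFin_eq_finSigmaFinEquiv {m : ℕ} (d : Fin m → ℕ) :
    sigmaToFin d = finSigmaFinEquiv := by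
  funext p
  ext
  have hIio : univ.filter (· < p.1) = univ.map (Fin.castLEEmb p.1.2.le) := by
    ext i
    simp only [mem_filter, mem_univ, true_and, mem_map, Fin.castLEEmb_apply]
    exact ⟨fun hi => ⟨⟨i, hi⟩, rfl⟩, by rintro ⟨j, rfl⟩; exact j.2⟩
  simp [sigmaToFin, hIio]

theorem finSigmaFinEquiv_zero_val {m : ℕ} {n : Fin (m + 1) → ℕ} (j : Fin (n 0)) :
    (finSigmaFinEquiv (⟨0, j⟩ : Σ i, Fin (n i)) : ℕ) = j := by
  simp

theorem finSigmaFinEquiv_succ_val {m : ℕ} {n : Fin (m + 1) → ℕ} (i : Fin m)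
    (j : Fin (n i.succ)) :
    (finSigmaFinEquiv (⟨i.succ, j⟩ : Σ i, Fin (n i)) : ℕ) =
      n 0 + finSigmaFinEquiv (n := fun i => n i.succ) ⟨i, j⟩ := by
  simp [Fin.sum_univ_succ, add_assoc]

def Fin.sigmaSuccEquiv {m : ℕ} (F : Fin (m + 1) → Type*) :
    (F 0 ⊕ Σ i : Fin m, F i.succ) ≃ Σ i, F i where
  toFun := Sum.elim (fun x => ⟨0, x⟩) (fun q => ⟨q.1.succ, q.2⟩)
  invFun p :=
    Fin.cases (motive := fun i => F i → _) Sum.inl (fun i x => Sum.inr ⟨i, x⟩) p.1 p.2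
  left_inv := by rintro (x | ⟨i, x⟩) <;> rfl
  right_inv := by rintro ⟨i, x⟩; cases i using Fin.cases <;> rfl

@[simp]
theorem Fin.sigmaSuccEquiv_inl {m : ℕ} (F : Fin (m + 1) → Type*) (x : F 0) :
    Fin.sigmaSuccEquiv F (.inl x) = ⟨0, x⟩ := rfl

@[simp]
theorem Fin.sigmaSuccEquiv_inr {m : ℕ} (F : Fin (m + 1) → Type*) (q : Σ i : Fin m, F i.succ) :
    Fin.sigmaSuccEquiv F (.inr q) = ⟨q.1.succ, q.2⟩ := rfl

end Indexing

section TaylorCoeffMatrix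

variable {R : Type*} [CommRing R] {m : ℕ}

noncomputable def taylorCoeffMatrix {ι : Type*} (f : ι → R[X]) (α : Fin m → R)
    (d : Fin m → ℕ) : Matrix ι (Σ i, Fin (d i)) R :=
  Matrix.of fun r q => (taylor (α q.1) (f r)).coeff q.2

theorem taylorCoeffMatrix_sum_smul {ι κ : Type*} [Fintype κ] (B : Matrix ι κ R)
    (g : κ → R[X]) (α : Fin m → R) (d : Fin m → ℕ) :
    taylorCoeffMatrix (fun r => ∑ s, B r s • g s) α d = B * taylorCoeffMatrix g α d := by
  ext r q
  simp [taylorCoeffMatrix, Matrix.mul_apply]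

theorem mul_eq_sum_coeff_smul_X_pow_mul {n : ℕ} (g : R[X]) (hdeg : g.natDegree < n)
    (h : R[X]) : g * h = ∑ k : Fin n, g.coeff k • (X ^ (k : ℕ) * h) := by
  conv_lhs => rw [as_sum_range' g n hdeg]
  rw [Fin.sum_univ_eq_sum_range (fun k => g.coeff k • (X ^ k * h)), sum_mul]
  simp [smul_eq_C_mul, ← C_mul_X_pow_eq_monomial, mul_assoc]

theorem det_taylorCoeffMatrix_monic_mul_eq {n : ℕ} (α : Fin m → R) (d : Fin m → ℕ)
    (e : (Σ i, Fin (d i)) ≃ Fin n) (g : (Σ i, Fin (d i)) → R[X])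
    (hmonic : ∀ p, (g p).Monic) (hdeg : ∀ p, (g p).natDegree = e p) (h : R[X]) :
    (taylorCoeffMatrix (fun p => g p * h) α d).det =
      (taylorCoeffMatrix (fun p => X ^ (e p : ℕ) * h) α d).det := by
  let B : Matrix _ _ R := Matrix.of fun p q => (g p).coeff (e q)
  have hB : B.det = 1 := by
    have hBt :
        B = (Matrix.of fun k l : Fin n => (g (e.symm l)).coeff k).transpose.submatrix e e := by
      ext p q; simp [B]
    rw [hBt, Matrix.det_submatrix_equiv_self, Matrix.det_transpose]
    exact Matrix.det_matrixOfPolynomials _ (by simp [hdeg]) (fun _ => hmonic _)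
  have hrows : (fun p => g p * h) = fun p => ∑ q, B p q • (X ^ (e q : ℕ) * h) := by
    funext p
    rw [mul_eq_sum_coeff_smul_X_pow_mul (g p) (hdeg p ▸ (e p).2) h, ← e.sum_comp]
    rfl
  rw [hrows, taylorCoeffMatrix_sum_smul, Matrix.det_mul, hB, one_mul]

theorem taylor_coeff_X_sub_C_pow_mul (a : R) (k : ℕ) (f : R[X]) (j : ℕ) :
    (taylor a ((X - C a) ^ k * f)).coeff j = if k ≤ j then (taylor a f).coeff (j - k) else 0 := by
  simp [coeff_X_pow_mul']

theorem det_taylor_coeff_X_sub_C_pow_mul (a : R) (f : R[X]) (n : ℕ) :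
    (Matrix.of fun j j' : Fin n => (taylor a ((X - C a) ^ (j : ℕ) * f)).coeff j').det =
      f.eval a ^ n := by
  rw [Matrix.det_of_isUpperTriangular fun j j' (hlt : j' < j) => by
    rw [Matrix.of_apply, taylor_coeff_X_sub_C_pow_mul, if_neg (not_le.mpr (Fin.lt_def.mp hlt))]]
  simp only [Matrix.of_apply, taylor_coeff_X_sub_C_pow_mul, le_refl, if_true, Nat.sub_self,
    taylor_coeff_zero, prod_const, card_univ, Fintype.card_fin]

noncomputable def firstPointBasis (a : R) (d : Fin (m + 1) → ℕ) :
    (Fin (d 0) ⊕ Σ i : Fin m, Fin (d i.succ)) → R[X] :=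
  Sum.elim (fun j => (X - C a) ^ (j : ℕ))
    (fun q => X ^ (finSigmaFinEquiv q : ℕ) * (X - C a) ^ d 0)

theorem firstPointBasis_monic (a : R) (d : Fin (m + 1) → ℕ)
    (x : Fin (d 0) ⊕ Σ i : Fin m, Fin (d i.succ)) :
    (firstPointBasis a d x).Monic := by
  rcases x with j | q
  · exact (monic_X_sub_C a).pow _
  · exact (monic_X_pow _).mul ((monic_X_sub_C a).pow _)

theorem firstPointBasis_natDegree [Nontrivial R] (a : R) (d : Fin (m + 1) → ℕ)
    (x : Fin (d 0) ⊕ Σ i : Fin m, Fin (d i.succ)) :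
    (firstPointBasis a d x).natDegree = finSigmaFinEquiv (Fin.sigmaSuccEquiv _ x) := by
  rcases x with j | ⟨i, j⟩
  · rw [Fin.sigmaSuccEquiv_inl, finSigmaFinEquiv_zero_val, firstPointBasis, Sum.elim_inl,
      (monic_X_sub_C a).natDegree_pow, natDegree_X_sub_C, mul_one]
  · rw [Fin.sigmaSuccEquiv_inr, finSigmaFinEquiv_succ_val, firstPointBasis, Sum.elim_inr,
      (monic_X_pow _).natDegree_mul ((monic_X_sub_C a).pow _), natDegree_X_pow,
      (monic_X_sub_C a).natDegree_pow, natDegree_X_sub_C, mul_one, add_comm]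

theorem det_taylorCoeffMatrix_firstPointBasis_mul (h : R[X]) (α : Fin (m + 1) → R)
    (d : Fin (m + 1) → ℕ) :
    (taylorCoeffMatrix (fun p => firstPointBasis (α 0) d ((Fin.sigmaSuccEquiv _).symm p) * h)
        α d).det =
      h.eval (α 0) ^ d 0 * (taylorCoeffMatrix
        (fun q => X ^ (finSigmaFinEquiv q : ℕ) * ((X - C (α 0)) ^ d 0 * h))
        (fun i => α i.succ) (fun i => d i.succ)).det := by
  set s := Fin.sigmaSuccEquiv fun i => Fin (d i)
  rw [← Matrix.det_submatrix_equiv_self s]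
  set M :=
    (taylorCoeffMatrix (fun p => firstPointBasis (α 0) d (s.symm p) * h) α d).submatrix s s
  have h11 : M.toBlocks₁₁ = Matrix.of fun j j' : Fin (d 0) =>
      (taylor (α 0) ((X - C (α 0)) ^ (j : ℕ) * h)).coeff j' := rfl
  have h21 : M.toBlocks₂₁ = 0 := by
    ext q j'
    change (taylor (α 0) (X ^ _ * (X - C (α 0)) ^ d 0 * h)).coeff j' = 0
    rw [mul_comm (X ^ _), mul_assoc, taylor_coeff_X_sub_C_pow_mul, if_neg (not_le.mpr j'.2)]
  have h22 : M.toBlocks₂₂ = taylorCoeffMatrix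
      (fun q => X ^ (finSigmaFinEquiv q : ℕ) * ((X - C (α 0)) ^ d 0 * h))
      (fun i => α i.succ) (fun i => d i.succ) := by
    ext q q'
    exact congr_arg (fun f => (taylor (α q'.1.succ) f).coeff q'.2) (mul_assoc _ _ _)
  rw [← M.fromBlocks_toBlocks, h21,
    Matrix.det_fromBlocks_zero₂₁, h11, h22, det_taylor_coeff_X_sub_C_pow_mul]

theorem det_taylorCoeffMatrix_X_pow_mul (h : R[X]) (α : Fin m → R) (d : Fin m → ℕ) :
    (taylorCoeffMatrix (fun p => X ^ (finSigmaFinEquiv p : ℕ) * h) α d).det =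
      (∏ i, ∏ j ∈ Ioi i, (α j - α i) ^ (d i * d j)) * ∏ i, h.eval (α i) ^ d i := by
  induction m generalizing h with
  | zero => simp [Matrix.det_isEmpty]
  | succ m ih =>
    nontriviality R
    rw [← det_taylorCoeffMatrix_monic_mul_eq α d finSigmaFinEquiv _
      (fun p => firstPointBasis_monic _ _ _)
      (fun p => by rw [firstPointBasis_natDegree, Equiv.apply_symm_apply]),
      det_taylorCoeffMatrix_firstPointBasis_mul, ih]
    simp only [eval_mul, eval_pow, eval_sub, eval_X, eval_C, mul_pow, ← pow_mul,
      prod_mul_distrib, Fin.prod_univ_succ, Fin.prod_Ioi_zero, Fin.prod_Ioi_succ]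
    ring

end TaylorCoeffMatrix

theorem taylor_coeff_eq_inv_factorial_mul_eval_iterate_derivative {K : Type*} [Field K]
    [CharZero K] (x : K) (f : K[X]) (j : ℕ) :
    (taylor x f).coeff j = ((j.factorial : K))⁻¹ * eval x (derivative^[j] f) := by
  rw [taylor_coeff, ← factorial_smul_hasseDeriv, LinearMap.smul_apply, nsmul_eq_mul, eval_mul,
    eval_natCast, inv_mul_cancel_left₀ (Nat.cast_ne_zero.mpr j.factorial_ne_zero)]

theorem confWronskian_eq_submatrix {K : Type*} [Field K] [CharZero K] (h : K[X]) {m : ℕ}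
    (α : Fin m → K) (d : Fin m → ℕ) :
    confWronskian h α d =
      (taylorCoeffMatrix (fun p => X ^ (finSigmaFinEquiv p : ℕ) * h) α d).submatrix
        finSigmaFinEquiv.symm finSigmaFinEquiv.symm := by
  ext k c
  have hcol : ∀ p, (sigmaToFin d p : ℕ) = c ↔ p = finSigmaFinEquiv.symm c := by
    intro p
    rw [sigmaToFin_eq_finSigmaFinEquiv, Fin.val_inj, Equiv.eq_symm_apply]
  simp only [confWronskian, taylorCoeffMatrix, Matrix.of_apply, Matrix.submatrix_apply, hcol,
    sum_ite_eq', mem_univ, if_true, Equiv.apply_symm_apply,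
    taylor_coeff_eq_inv_factorial_mul_eval_iterate_derivative]

theorem det_confWronskian {K : Type*} [Field K] [CharZero K] (h : Polynomial K) {m : ℕ}
    (α : Fin m → K) (d : Fin m → ℕ) :
    (confWronskian h α d).det =
      (∏ i, ∏ j ∈ Finset.Ioi i, (α j - α i) ^ (d i * d j)) *
        ∏ i, (Polynomial.eval (α i) h) ^ (d i) := by
  rw [confWronskian_eq_submatrix, Matrix.det_submatrix_equiv_self,
    det_taylorCoeffMatrix_X_pow_mul]
end

section
/- Fix $1\le i\le m$ and $0\le j<d_i$. The basic Hermite interpolation polynomial $p_{i,j}$ (of degree $<d$, with $p_{i,j}^{(j)}(\alpha_i)=j!$ and all other derivative conditions zero) equals $\frac{1}{\overline{f}_i(\alpha_i)}\sum_{k=0}^{d_i-1-j}(-1)^k\Big(\sum_{k_1+\cdots+\widehat{k_i}+\cdots+k_m=k}\prod_{\ell\ne i}\frac{\binom{d_\ell-1+k_\ell}{k_\ell}}{(\alpha_i-\alpha_\ell)^{k_\ell}}\Big)\overline{f}_{i,j+k}$. -/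
/-!
Write `f̄ᵢ(αᵢ + X) = ∏_{ℓ ≠ i} (X + (αᵢ - α_ℓ))^{d_ℓ}` and let `φ` be its inverse power series.
Expanding `(X + a)^{-n} = ∑ₖ (-1)^k binom(n-1+k, k) a^{-n-k} X^k` factor by factor shows that the
claimed right-hand side is `r = ∑_{k < dᵢ - j} φₖ (x - αᵢ)^{j+k} f̄ᵢ`. Around `αᵢ` the Taylor
expansion of `r` is `X^j · (trunc φ) · f̄ᵢ(αᵢ + X) = X^j (1 + O(X^{dᵢ-j}))`, and `r` is divisible by
`(x - α_ℓ)^{d_ℓ}` for `ℓ ≠ i`; so `r` satisfies the Hermite conditions of `p_{i,j}` and has degree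
`< d`. Two such polynomials agree, since `∏_ℓ (x - α_ℓ)^{d_ℓ}` divides their difference.
-/

open Finset Polynomial

/-- The tuples `(k_ℓ)_{ℓ ≠ i}` of nonnegative integers summing to `k`
(encoded as functions on `Fin m` vanishing at `i`). -/
def holeTuples (m : ℕ) (i : Fin m) (k : ℕ) : Finset (Fin m → ℕ) :=
  (Fintype.piFinset fun _ : Fin m => Finset.range (k + 1)).filter
    fun κ => κ i = 0 ∧ ∑ ℓ, κ ℓ = k

theorem Finset.sum_finsuppAntidiag_eq_sum_piAntidiag {ι μ M : Type*} [DecidableEq ι]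
    [AddCommMonoid μ] [HasAntidiagonal μ] [DecidableEq μ] [AddCommMonoid M]
    (s : Finset ι) (n : μ) (f : (ι → μ) → M) :
    ∑ l ∈ finsuppAntidiag s n, f l = ∑ g ∈ piAntidiag s n, f g := by
  rw [finsuppAntidiag, sum_map, ← sum_attach (piAntidiag s n)]
  rfl

theorem holeTuples_eq_piAntidiag (m : ℕ) (i : Fin m) (k : ℕ) :
    holeTuples m i k = piAntidiag (univ.erase i) k := by
  ext κ
  have hsplit : ∑ ℓ ∈ univ.erase i, κ ℓ + κ i = ∑ ℓ, κ ℓ := sum_erase_add univ κ (mem_univ i)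
  simp only [holeTuples, mem_filter, Fintype.mem_piFinset, mem_range, mem_piAntidiag, mem_erase,
    mem_univ, and_true]
  constructor
  · rintro ⟨-, hi, hk⟩
    rw [hi, add_zero, hk] at hsplit
    exact ⟨hsplit, fun ℓ hℓ h => hℓ (h ▸ hi)⟩
  · rintro ⟨hk, hsupp⟩
    have hi : κ i = 0 := by_contra fun h => hsupp i h rfl
    rw [hk, hi, add_zero] at hsplit
    refine ⟨fun ℓ => ?_, hi, hsplit.symm⟩
    have := single_le_sum (fun ℓ _ => Nat.zero_le (κ ℓ)) (mem_univ ℓ)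
    omega

namespace PowerSeries

theorem coeff_trunc_mul_of_lt {R : Type*} [CommSemiring R] (φ : R⟦X⟧) (p : R[X]) {t N : ℕ}
    (h : t < N) : (trunc N φ * p).coeff t = coeff t (φ * (p : R⟦X⟧)) :=
  calc (trunc N φ * p).coeff t = (trunc N ((trunc N φ : R⟦X⟧) * (p : R⟦X⟧))).coeff t := by
        rw [coeff_trunc, if_pos h, ← Polynomial.coe_mul, Polynomial.coeff_coe]
    _ = coeff t (φ * (p : R⟦X⟧)) := by rw [trunc_trunc_mul, coeff_trunc, if_pos h]

variable {K : Type*} [Field K]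

theorem X_add_C_pow_succ_mul_mk_eq_one {a : K} (ha : a ≠ 0) (n : ℕ) :
    (X + C a) ^ (n + 1) * mk (fun k => (-1) ^ k * ((n + k).choose k : K) / a ^ (n + 1 + k)) =
      1 := by
  have hX : X + C a = C a * rescale (-a⁻¹) (1 - X) := by
    rw [map_sub, map_one, rescale_X, mul_sub, mul_one, ← mul_assoc, ← map_mul]
    simp [ha, add_comm]
  have hmk : mk (fun k => (-1) ^ k * ((n + k).choose k : K) / a ^ (n + 1 + k)) =
      C (a⁻¹ ^ (n + 1)) * rescale (-a⁻¹) (invOneSubPow K (n + 1)).val := by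
    ext k
    rw [coeff_mk, coeff_C_mul, coeff_rescale, invOneSubPow_val_succ_eq_mk_add_choose, coeff_mk,
      Nat.choose_symm_add, neg_pow (a⁻¹), pow_add, inv_pow, inv_pow]
    field_simp
  have hinv : (1 - X : K⟦X⟧) ^ (n + 1) * (invOneSubPow K (n + 1)).val = 1 :=
    (invOneSubPow K (n + 1)).inv_val
  rw [hmk, hX, mul_pow, ← map_pow, mul_mul_mul_comm, ← map_mul, ← map_pow, ← map_mul, hinv,
    map_one, mul_one, ← mul_pow, mul_inv_cancel₀ ha, one_pow, map_one]

theorem coeff_inv_X_add_C_pow {a : K} (ha : a ≠ 0) {n : ℕ} (hn : n ≠ 0) (k : ℕ) :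
    coeff k ((X + C a) ^ n)⁻¹ = (-1) ^ k * ((n - 1 + k).choose k : K) / a ^ (n + k) := by
  obtain ⟨n, rfl⟩ : ∃ n', n = n' + 1 := ⟨n - 1, by omega⟩
  have hc : constantCoeff ((X + C a) ^ (n + 1)) ≠ 0 := by simp [ha]
  rw [(inv_eq_iff_mul_eq_one hc).2 ((mul_comm _ _).trans (X_add_C_pow_succ_mul_mk_eq_one ha n)),
    coeff_mk, Nat.add_sub_cancel]

theorem coeff_prod_inv_X_add_C_pow {ι : Type*} [DecidableEq ι] (s : Finset ι) {A : ι → K}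
    (hA : ∀ ℓ ∈ s, A ℓ ≠ 0) {d : ι → ℕ} (hd : ∀ ℓ ∈ s, d ℓ ≠ 0) (k : ℕ) :
    coeff k (∏ ℓ ∈ s, ((X + C (A ℓ)) ^ d ℓ)⁻¹) = (∏ ℓ ∈ s, A ℓ ^ d ℓ)⁻¹ *
      ((-1) ^ k *
        ∑ κ ∈ piAntidiag s k, ∏ ℓ ∈ s, ((d ℓ - 1 + κ ℓ).choose (κ ℓ) : K) / A ℓ ^ κ ℓ) := by
  rw [coeff_prod, sum_finsuppAntidiag_eq_sum_piAntidiag s k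
    fun κ => ∏ ℓ ∈ s, coeff (κ ℓ) ((X + C (A ℓ)) ^ d ℓ)⁻¹, mul_sum, mul_sum]
  refine sum_congr rfl fun κ hκ => ?_
  rw [← (mem_piAntidiag.1 hκ).1, ← prod_pow_eq_pow_sum, ← prod_inv_distrib, ← prod_mul_distrib,
    ← prod_mul_distrib]
  refine prod_congr rfl fun ℓ hℓ => ?_
  rw [coeff_inv_X_add_C_pow (hA ℓ hℓ) (hd ℓ hℓ), pow_add]
  field_simp

end PowerSeries

namespace Polynomial

section CommRing

variable {R : Type*} [CommRing R]

theorem eval_iterate_derivative_eq_factorial_mul_coeff_taylor (p : R[X]) (a : R) (q : ℕ) :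
    eval a (derivative^[q] p) = q.factorial * (taylor a p).coeff q := by
  rw [← factorial_smul_hasseDeriv, taylor_coeff, LinearMap.smul_apply, eval_smul, nsmul_eq_mul]

theorem taylor_prod_X_sub_C_pow {ι : Type*} (s : Finset ι) (α : ι → R) (d : ι → ℕ) (a : R) :
    taylor a (∏ ℓ ∈ s, (X - C (α ℓ)) ^ d ℓ) = ∏ ℓ ∈ s, (X + C (a - α ℓ)) ^ d ℓ := by
  rw [taylor_apply, Polynomial.prod_comp]
  simp only [pow_comp, sub_comp, X_comp, C_comp, C_sub, add_sub_assoc]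

theorem natDegree_prod_X_sub_C_pow [Nontrivial R] {ι : Type*} (s : Finset ι) (α : ι → R)
    (d : ι → ℕ) : (∏ ℓ ∈ s, (X - C (α ℓ)) ^ d ℓ).natDegree = ∑ ℓ ∈ s, d ℓ := by
  rw [natDegree_prod_of_monic _ _ fun ℓ _ => (monic_X_sub_C _).pow _]
  simp [(monic_X_sub_C _).natDegree_pow]

variable (a : R) (g : R[X]) (φ : PowerSeries R) (j N : ℕ)

theorem taylor_sum_coeff_mul_X_sub_C_pow_mul :
    taylor a (∑ k ∈ range N, C (PowerSeries.coeff k φ) * ((X - C a) ^ (j + k) * g)) =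
      X ^ j * (PowerSeries.trunc N φ * taylor a g) := by
  have htrunc : PowerSeries.trunc N φ = ∑ k ∈ range N, C (PowerSeries.coeff k φ) * X ^ k := by
    ext n
    simp [PowerSeries.coeff_trunc, coeff_X_pow]
  simp [htrunc, taylor_mul, taylor_X, pow_add, mul_sum, sum_mul, mul_assoc, mul_left_comm]

theorem degree_sum_coeff_mul_X_sub_C_pow_mul_lt :
    (∑ k ∈ range N, C (PowerSeries.coeff k φ) * ((X - C a) ^ (j + k) * g)).degree <
      ↑(j + N + g.natDegree) := by
  refine (degree_sum_le _ _).trans_lt <| (Finset.sup_lt_iff (WithBot.bot_lt_coe _)).2 fun k hk => ?_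
  refine degree_le_natDegree.trans_lt <| WithBot.coe_lt_coe.2 <|
    (natDegree_C_mul_le _ _).trans_lt <| natDegree_mul_le.trans_lt ?_
  have hpow := natDegree_pow_le_of_le (j + k) (natDegree_X_sub_C_le a)
  rw [Nat.cast_id]
  have := mem_range.1 hk
  omega

theorem eval_iterate_derivative_sum_coeff_mul_X_sub_C_pow_mul
    (hφ : (taylor a g : PowerSeries R) * φ = 1) {q : ℕ} (hq : q < j + N) :
    eval a (derivative^[q] (∑ k ∈ range N, C (PowerSeries.coeff k φ) * ((X - C a) ^ (j + k) * g))) =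
      if q = j then (j.factorial : R) else 0 := by
  rw [eval_iterate_derivative_eq_factorial_mul_coeff_taylor,
    taylor_sum_coeff_mul_X_sub_C_pow_mul, coeff_X_pow_mul']
  split_ifs with hjq hqj hqj
  · rw [PowerSeries.coeff_trunc_mul_of_lt _ _ (by omega), mul_comm φ, hφ, PowerSeries.coeff_one,
      if_pos (by omega), hqj, mul_one]
  · rw [PowerSeries.coeff_trunc_mul_of_lt _ _ (by omega), mul_comm φ, hφ, PowerSeries.coeff_one,
      if_neg (by omega), mul_zero]
  · omega
  · rw [mul_zero]

end CommRing

variable {K : Type*} [Field K]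

theorem coe_taylor_prod_X_sub_C_pow_mul_prod_inv {ι : Type*} (s : Finset ι) {α : ι → K} {a : K}
    (hα : ∀ ℓ ∈ s, a - α ℓ ≠ 0) (d : ι → ℕ) :
    (taylor a (∏ ℓ ∈ s, (X - C (α ℓ)) ^ d ℓ) : PowerSeries K) *
      ∏ ℓ ∈ s, ((PowerSeries.X + PowerSeries.C (a - α ℓ)) ^ d ℓ)⁻¹ = 1 := by
  rw [taylor_prod_X_sub_C_pow, ← coeToPowerSeries.ringHom_apply, map_prod]
  simp only [map_pow, map_add, coeToPowerSeries.ringHom_apply, coe_X, coe_C]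
  rw [← prod_mul_distrib]
  exact prod_eq_one fun ℓ hℓ => PowerSeries.mul_inv_cancel _ (by simp [hα ℓ hℓ])

theorem pow_dvd_iff_eval_iterate_derivative_eq_zero [CharZero K] {p : K[X]} {a : K} {n : ℕ} :
    (X - C a) ^ n ∣ p ↔ ∀ q < n, eval a (derivative^[q] p) = 0 := by
  rcases eq_or_ne p 0 with rfl | hp
  · simp
  cases n with
  | zero => simp
  | succ n =>
    rw [← le_rootMultiplicity_iff hp, Nat.succ_le_iff,
      lt_rootMultiplicity_iff_isRoot_iterate_derivative hp]
    simp only [IsRoot.def, Nat.lt_succ_iff]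

theorem eq_of_degree_lt_of_eval_iterate_derivative_eq [CharZero K] {ι : Type*} [Fintype ι]
    {α : ι → K} (hα : Function.Injective α) {d : ι → ℕ} {p r : K[X]}
    (hp : p.degree < ↑(∑ ℓ, d ℓ)) (hr : r.degree < ↑(∑ ℓ, d ℓ))
    (h : ∀ ℓ, ∀ q < d ℓ, eval (α ℓ) (derivative^[q] p) = eval (α ℓ) (derivative^[q] r)) :
    p = r := by
  classical
  have hdvd : (∏ ℓ, (X - C (α ℓ)) ^ d ℓ) ∣ p - r :=
    prod_dvd_of_coprime (fun ℓ _ ℓ' _ hne => ((pairwise_coprime_X_sub_C hα) hne).pow)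
      fun ℓ _ => pow_dvd_iff_eval_iterate_derivative_eq_zero.2 fun q hq => by
        rw [iterate_derivative_sub, eval_sub, h ℓ q hq, sub_self]
  have hdeg : (∏ ℓ, (X - C (α ℓ)) ^ d ℓ).degree = ↑(∑ ℓ, d ℓ) := by
    rw [degree_eq_natDegree (monic_prod_of_monic _ _ fun ℓ _ => (monic_X_sub_C _).pow _).ne_zero,
      natDegree_prod_X_sub_C_pow]
  exact sub_eq_zero.1 <| eq_zero_of_dvd_of_degree_lt hdvd <|
    hdeg ▸ (degree_sub_le p r).trans_lt (max_lt hp hr)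

end Polynomial

/-- Explicit formula for the basic Hermite interpolation polynomial `p_{i,j}`:
if `p` has degree `< d = ∑ dᵢ` and satisfies `p^{(j)}(αᵢ) = j!` with all other
derivative conditions up to the multiplicities vanishing, then
`p = (1/f̄ᵢ(αᵢ)) ∑_{k=0}^{dᵢ-1-j} (-1)^k (∑_{∑ k_ℓ = k} ∏_{ℓ≠i} binom(d_ℓ-1+k_ℓ, k_ℓ)/(αᵢ-α_ℓ)^{k_ℓ}) f̄_{i,j+k}`,
where `f̄_{i,k} = (x - αᵢ)^k ∏_{ℓ≠i} (x - α_ℓ)^{d_ℓ}`. -/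
theorem basic_hermite_formula {K : Type*} [Field K] [CharZero K] {m : ℕ}
    (α : Fin m → K) (hα : Function.Injective α) (d : Fin m → ℕ) (hd : ∀ ℓ, 1 ≤ d ℓ)
    (i : Fin m) (j : ℕ) (hj : j < d i) (p : Polynomial K)
    (hdeg : p.degree < (∑ ℓ, d ℓ : ℕ))
    (hcond : ∀ (ℓ : Fin m) (q : ℕ), q < d ℓ →
      Polynomial.eval (α ℓ) (Polynomial.derivative^[q] p) =
        if ℓ = i ∧ q = j then (j.factorial : K) else 0) :
    p = Polynomial.C (∏ ℓ ∈ Finset.univ.erase i, (α i - α ℓ) ^ (d ℓ))⁻¹ *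
      ∑ k ∈ Finset.range (d i - j),
        Polynomial.C ((-1 : K) ^ k *
            ∑ κ ∈ holeTuples m i k, ∏ ℓ ∈ Finset.univ.erase i,
              ((d ℓ - 1 + κ ℓ).choose (κ ℓ) : K) / (α i - α ℓ) ^ (κ ℓ)) *
          ((X - Polynomial.C (α i)) ^ (j + k) *
            ∏ ℓ ∈ Finset.univ.erase i, (X - Polynomial.C (α ℓ)) ^ (d ℓ)) := by
  set g := ∏ ℓ ∈ univ.erase i, (X - C (α ℓ)) ^ d ℓ
  set φ : PowerSeries K :=
    ∏ ℓ ∈ univ.erase i, ((PowerSeries.X + PowerSeries.C (α i - α ℓ)) ^ d ℓ)⁻¹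
  have hA : ∀ ℓ ∈ univ.erase i, α i - α ℓ ≠ 0 := fun ℓ hℓ =>
    sub_ne_zero.2 (hα.ne (mem_erase.1 hℓ).1).symm
  suffices hp :
      p = ∑ k ∈ range (d i - j), C (PowerSeries.coeff k φ) * ((X - C (α i)) ^ (j + k) * g) by
    rw [hp, mul_sum]
    refine sum_congr rfl fun k _ => ?_
    rw [PowerSeries.coeff_prod_inv_X_add_C_pow _ hA (fun ℓ _ => by have := hd ℓ; omega),
      holeTuples_eq_piAntidiag, C_mul, C_mul, mul_assoc, mul_assoc]
  have hφ : (taylor (α i) g : PowerSeries K) * φ = 1 :=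
    coe_taylor_prod_X_sub_C_pow_mul_prod_inv _ hA d
  have hD : j + (d i - j) + g.natDegree = ∑ ℓ, d ℓ := by
    rw [natDegree_prod_X_sub_C_pow, ← sum_erase_add _ _ (mem_univ i)]
    omega
  refine eq_of_degree_lt_of_eval_iterate_derivative_eq hα hdeg
    (hD ▸ degree_sum_coeff_mul_X_sub_C_pow_mul_lt _ _ _ _ _) fun ℓ q hq => ?_
  rw [hcond ℓ q hq]
  by_cases hℓ : ℓ = i
  · subst hℓ
    rw [eval_iterate_derivative_sum_coeff_mul_X_sub_C_pow_mul _ _ _ _ _ hφ (by omega)]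
    simp
  · have hdvd : (X - C (α ℓ)) ^ d ℓ ∣ g := dvd_prod_of_mem _ (mem_erase.2 ⟨hℓ, mem_univ ℓ⟩)
    rw [if_neg (by tauto), pow_dvd_iff_eval_iterate_derivative_eq_zero.1
      (dvd_sum fun k _ => (hdvd.mul_left _).mul_left _) q hq]
end

section
/- Let $\overline{f}=\prod_{i=1}^m(x-\alpha_i)^{d_i}$ have degree $d$ and $\overline{g}$ be monic of degree $e>d-1$. Then the $(d-1)$-st subresultant of $\overline{f}$ and $\overline{g}$ equals the Hermite interpolation polynomial of degree $<d$ agreeing with $\overline{g}$ and its derivatives at each $\alpha_i$ up to order $d_i-1$: $\mathrm{Sres}_{d-1}(\overline{f},\overline{g})=\sum_{i=1}^m\sum_{j=0}^{d_i-1}\frac{\overline{g}^{(j)}(\alpha_i)}{j!}\,p_{i,j}$, where $p_{i,j}$ are the basic Hermite polynomials for $((\alpha_1,d_1);\ldots;(\alpha_m,d_m))$. -/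
open Finset Polynomial

/-- The `t`-th subresultant of `f` and `g` (of formal degrees `d` and `e`), defined as
the determinant of the `(d+e-2t) × (d+e-2t)` Sylvester-type matrix whose first `e-t`
rows contain the coefficients of `f` (shifted), last column `x^{e-t-1-r} f`, and whose
last `d-t` rows contain the coefficients of `g` (shifted), last column `x^{d-t-1-r'} g`. -/
noncomputable def Sres {K : Type*} [CommRing K] (f g : Polynomial K) (d e t : ℕ) :
    Polynomial K :=
  Matrix.det (Matrix.of fun r c : Fin (d + e - 2 * t) =>
    if (r : ℕ) < e - t then
      if (c : ℕ) = d + e - 2 * t - 1 then X ^ (e - t - 1 - (r : ℕ)) * f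
      else if (c : ℕ) ≤ d + (r : ℕ) then Polynomial.C (f.coeff (d + (r : ℕ) - (c : ℕ)))
      else 0
    else
      if (c : ℕ) = d + e - 2 * t - 1 then X ^ (d - t - 1 - ((r : ℕ) - (e - t))) * g
      else if (c : ℕ) ≤ e + ((r : ℕ) - (e - t)) then
        Polynomial.C (g.coeff (e + ((r : ℕ) - (e - t)) - (c : ℕ)))
      else 0)

/-!
For monic `f` of degree `d ≤ e`, `Sres f g d e (d - 1)` is the determinant of a square matrix all of
whose columns but the last are constant. Laplace expansion along the last column gives
`Sres ≡ g mod f`, since the minor complementary to the `g` entry is unitriangular. For `k ≥ d`, the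
`k`-th coefficients of the last column reproduce an earlier column, so `deg Sres < d`; hence
`Sres = g %ₘ f`. The Hermite sum `H` has degree `< d` and shares with `g` all derivatives of order
`< dᵢ` at each `αᵢ`, so the pairwise coprime factors `(X - αᵢ) ^ dᵢ` all divide `g - H`, and
`H = g %ₘ f` as well.
-/

namespace Polynomial

section Subresultant

variable {R : Type*} [CommRing R]

theorem modByMonic_eq_of_dvd_sub_of_degree_lt [Nontrivial R] {f p q : R[X]} (hf : f.Monic)
    (hdvd : f ∣ p - q) (hq : q.degree < f.degree) : p %ₘ f = q :=
  (modByMonic_eq_of_dvd_sub hf hdvd).trans ((modByMonic_eq_self_iff hf).2 hq)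

theorem coeff_det_updateCol_map_C {n : ℕ} (B : Matrix (Fin (n + 1)) (Fin (n + 1)) R)
    (j : Fin (n + 1)) (w : Fin (n + 1) → R[X]) (k : ℕ) :
    ((B.map C).updateCol j w).det.coeff k = (B.updateCol j fun i => (w i).coeff k).det := by
  simp only [Matrix.det_succ_column _ j, Matrix.updateCol_self, finsetSum_coeff]
  refine Finset.sum_congr rfl fun i _ => ?_
  have hminor : ((B.map C).updateCol j w).submatrix i.succAbove j.succAbove =
      ((B.updateCol j fun i => (w i).coeff k).submatrix i.succAbove j.succAbove).map C := by
    ext r c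
    simp
  rw [hminor, ← RingHom.mapMatrix_apply, ← RingHom.map_det, coeff_mul_C,
    show (-1 : R[X]) ^ (i + j : ℕ) = C ((-1) ^ (i + j : ℕ)) by simp, coeff_C_mul]

/- `sresMatrix f g d e N` with `N = e - d + 1` is the matrix of `Sres f g d e (d - 1)` reindexed by
`Fin (N + 1)`: `N` rows of shifted coefficients of `f` and one row of coefficients of `g`, with the
polynomial column `X ^ (N - 1 - r) * f`, resp. `g`, last. -/
noncomputable def sresScalarMatrix (f g : R[X]) (d e N : ℕ) :
    Matrix (Fin (N + 1)) (Fin (N + 1)) R :=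
  Matrix.of fun r c =>
    if (r : ℕ) < N then (if (c : ℕ) ≤ d + r then f.coeff (d + r - c) else 0) else g.coeff (e - c)

noncomputable def sresLastCol (f g : R[X]) (N : ℕ) (r : Fin (N + 1)) : R[X] :=
  if (r : ℕ) < N then X ^ (N - 1 - r) * f else g

noncomputable def sresMatrix (f g : R[X]) (d e N : ℕ) : Matrix (Fin (N + 1)) (Fin (N + 1)) R[X] :=
  ((sresScalarMatrix f g d e N).map C).updateCol (Fin.last N) (sresLastCol f g N)

theorem sres_sub_one_eq_det_sresMatrix (f g : R[X]) {d e : ℕ} (hd : 0 < d) (hde : d ≤ e) :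
    Sres f g d e (d - 1) = (sresMatrix f g d e (e - d + 1)).det := by
  have hsize : d + e - 2 * (d - 1) = e - d + 1 + 1 := by omega
  rw [Sres, ← Matrix.det_reindex_self (finCongr hsize)]
  congr 1
  refine Matrix.ext fun r c => ?_
  have hN : e - (d - 1) = e - d + 1 := by omega
  have hlast : d + e - 2 * (d - 1) - 1 = e - d + 1 := by omega
  simp only [Matrix.reindex_apply, Matrix.submatrix_apply, Matrix.of_apply, finCongr_symm,
    finCongr_apply, Fin.val_cast, sresMatrix, Matrix.updateCol_apply, Matrix.map_apply,
    sresScalarMatrix, sresLastCol, Fin.ext_iff, Fin.val_last, hN, hlast]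
  have hr : ¬ (r : ℕ) < e - d + 1 → (r : ℕ) - (e - d + 1) = 0 := by omega
  split_ifs <;> first | omega | simp_all [show d - (d - 1) - 1 = 0 by omega]

variable {f g : R[X]} {d e N : ℕ}

theorem degree_det_sresMatrix_lt (hf : f.natDegree ≤ d) (hg : g.natDegree ≤ e)
    (hN : N + d = e + 1) : (sresMatrix f g d e N).det.degree < d := by
  rw [degree_lt_iff_coeff_zero]
  intro k hk
  rw [sresMatrix, coeff_det_updateCol_map_C]
  by_cases hke : k ≤ e
  · -- column `e - k` of the scalar part equals the `k`-th coefficients of the last column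
    have hne : (⟨e - k, by omega⟩ : Fin (N + 1)) ≠ Fin.last N := by
      simp only [ne_eq, Fin.ext_iff, Fin.val_last]; omega
    refine Matrix.det_zero_of_column_eq hne fun r => ?_
    rw [Matrix.updateCol_ne hne, Matrix.updateCol_self]
    by_cases hr : (r : ℕ) < N
    · simp only [sresScalarMatrix, sresLastCol, Matrix.of_apply, hr, if_true, coeff_X_pow_mul']
      split_ifs <;> first | (congr 1; omega) | omega | rfl
    · simp only [sresScalarMatrix, sresLastCol, Matrix.of_apply, hr, if_false]
      congr 1; omega
  · refine Matrix.det_eq_zero_of_column_eq_zero (Fin.last N) fun r => ?_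
    rw [Matrix.updateCol_self]
    by_cases hr : (r : ℕ) < N
    · simp only [sresLastCol, hr, if_true]
      have hX := natDegree_X_pow_le (R := R) (N - 1 - r)
      exact coeff_eq_zero_of_natDegree_lt (natDegree_mul_le.trans_lt (by omega))
    · simp only [sresLastCol, hr, if_false]
      exact coeff_eq_zero_of_natDegree_lt (by omega)

theorem dvd_det_sresMatrix_sub (hf : f.natDegree ≤ d) (hlead : f.coeff d = 1) :
    f ∣ (sresMatrix f g d e N).det - g := by
  have hminor : ((sresMatrix f g d e N).submatrix (Fin.last N).succAbove
      (Fin.last N).succAbove).det = 1 := by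
    rw [Matrix.det_of_isUpperTriangular]
    · refine Finset.prod_eq_one fun i _ => ?_
      simp [sresMatrix, sresScalarMatrix, Fin.succAbove_last, hlead]
    · intro i j hji
      have hji : (j : ℕ) < i := hji
      simp only [sresMatrix, sresScalarMatrix, Fin.succAbove_last, Matrix.submatrix_apply,
        Matrix.updateCol_ne (Fin.castSucc_ne_last j), Matrix.map_apply, Matrix.of_apply,
        Fin.val_castSucc, Fin.is_lt, ↓reduceIte, C_eq_zero, ite_eq_right_iff]
      intro _
      exact coeff_eq_zero_of_natDegree_lt (by omega)
  rw [Matrix.det_succ_column _ (Fin.last N), Fin.sum_univ_castSucc, hminor]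
  simp only [Nat.succ_eq_add_one, Fin.val_castSucc, Fin.val_last, sresMatrix,
    Matrix.updateCol_self, sresLastCol, Fin.is_lt, ↓reduceIte, Fin.succAbove_last, Even.add_self,
    Even.neg_pow, one_pow, lt_self_iff_false, one_mul, mul_one, add_sub_cancel_right]
  exact dvd_sum fun i _ => ((dvd_mul_left f _).mul_left _).mul_right _

theorem sres_sub_one_eq_modByMonic [Nontrivial R] (hf : f.Monic) (hfd : f.natDegree = d)
    (hg : g.natDegree ≤ e) (hd : 0 < d) (hde : d ≤ e) : Sres f g d e (d - 1) = g %ₘ f := by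
  rw [sres_sub_one_eq_det_sresMatrix f g hd hde]
  refine (modByMonic_eq_of_dvd_sub_of_degree_lt hf ?_ ?_).symm
  · exact dvd_sub_comm.1 (dvd_det_sresMatrix_sub hfd.le (hfd ▸ hf.coeff_natDegree))
  · rw [degree_eq_natDegree hf.ne_zero, hfd]
    exact degree_det_sresMatrix_lt hfd.le hg (by omega)

end Subresultant

section Hermite

theorem X_sub_C_pow_dvd_of_eval_iterate_derivative_eq_zero {R : Type*} [CommRing R]
    [NoZeroDivisors R] [CharZero R] {p : R[X]} {a : R} {n : ℕ}
    (h : ∀ q < n, (derivative^[q] p).eval a = 0) : (X - C a) ^ n ∣ p := by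
  rcases eq_or_ne p 0 with rfl | hp
  · exact dvd_zero _
  rw [← le_rootMultiplicity_iff hp]
  cases n with
  | zero => exact Nat.zero_le _
  | succ n =>
    exact lt_rootMultiplicity_of_isRoot_iterate_derivative hp fun q hq => h q (Nat.lt_succ_of_le hq)

variable {K ι : Type*} [Field K] [Fintype ι]

theorem prod_X_sub_C_pow_dvd_sub_of_eval_iterate_derivative_eq [CharZero K] {α : ι → K}
    (hα : Function.Injective α) (n : ι → ℕ) {p q : K[X]}
    (h : ∀ i, ∀ j < n i, (derivative^[j] p).eval (α i) = (derivative^[j] q).eval (α i)) :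
    ∏ i, (X - C (α i)) ^ n i ∣ p - q :=
  Fintype.prod_dvd_of_coprime (fun _ _ hij => (pairwise_coprime_X_sub_C hα hij).pow) fun i =>
    X_sub_C_pow_dvd_of_eval_iterate_derivative_eq_zero fun j hj => by
      rw [iterate_derivative_sub, eval_sub, h i j hj, sub_self]

noncomputable def hermiteInterpolant (α : ι → K) (n : ι → ℕ) (p : ι → ℕ → K[X]) (g : K[X]) :
    K[X] :=
  ∑ i, ∑ j ∈ range (n i), C ((derivative^[j] g).eval (α i) / (j.factorial : K)) * p i j

variable {α : ι → K} {n : ι → ℕ} {p : ι → ℕ → K[X]}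

theorem degree_hermiteInterpolant_lt {d : ℕ} (hp : ∀ i, ∀ j < n i, (p i j).degree < d)
    (g : K[X]) : (hermiteInterpolant α n p g).degree < d := by
  simp_rw [← mem_degreeLT] at hp ⊢
  exact sum_mem fun i _ => sum_mem fun j hj => by
    rw [← smul_eq_C_mul]
    exact Submodule.smul_mem _ _ (hp i j (mem_range.1 hj))

theorem eval_iterate_derivative_hermiteInterpolant [CharZero K] [DecidableEq ι]
    (hp : ∀ i, ∀ j < n i, ∀ ℓ, ∀ q < n ℓ,
      (derivative^[q] (p i j)).eval (α ℓ) = if ℓ = i ∧ q = j then (j.factorial : K) else 0)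
    (g : K[X]) {ℓ : ι} {q : ℕ} (hq : q < n ℓ) :
    (derivative^[q] (hermiteInterpolant α n p g)).eval (α ℓ) = (derivative^[q] g).eval (α ℓ) := by
  simp only [hermiteInterpolant, iterate_derivative_sum, iterate_derivative_C_mul, eval_finsetSum,
    eval_mul, eval_C]
  rw [sum_eq_single_of_mem ℓ (mem_univ _) fun i _ hi => sum_eq_zero fun j hj => by
      rw [hp i j (mem_range.1 hj) ℓ q hq, if_neg fun h => hi h.1.symm, mul_zero],
    sum_eq_single_of_mem q (mem_range.2 hq) fun j hj hjq => by
      rw [hp ℓ j (mem_range.1 hj) ℓ q hq, if_neg fun h => hjq h.2.symm, mul_zero],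
    hp ℓ q hq ℓ q hq, if_pos ⟨rfl, rfl⟩, div_mul_cancel₀ _ (Nat.cast_ne_zero.2 q.factorial_ne_zero)]

end Hermite

end Polynomial

theorem sres_dsub1_general {K : Type*} [Field K] [CharZero K] {m : ℕ}
    (α : Fin m → K) (hα : Function.Injective α) (dd : Fin m → ℕ)
    (d e : ℕ) (hd : d = ∑ i, dd i) (hdpos : 0 < d) (hde : d - 1 < e)
    (g : Polynomial K) (hge : g.natDegree = e)
    (p : (i : Fin m) → ℕ → Polynomial K)
    (hpdeg : ∀ (i : Fin m) (j : ℕ), j < dd i → (p i j).degree < (d : ℕ))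
    (hpcond : ∀ (i : Fin m) (j : ℕ), j < dd i → ∀ (ℓ : Fin m) (q : ℕ), q < dd ℓ →
      Polynomial.eval (α ℓ) (Polynomial.derivative^[q] (p i j)) =
        if ℓ = i ∧ q = j then (j.factorial : K) else 0) :
    Sres (∏ i, (X - Polynomial.C (α i)) ^ (dd i)) g d e (d - 1) =
      ∑ i, ∑ j ∈ Finset.range (dd i),
        Polynomial.C (Polynomial.eval (α i) (Polynomial.derivative^[j] g) / (j.factorial : K)) *
          p i j := by
  have hfactor : ∀ i ∈ univ, ((X - C (α i)) ^ dd i).Monic := fun i _ => (monic_X_sub_C _).pow _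
  have hf : (∏ i, (X - C (α i)) ^ dd i).Monic := monic_prod_of_monic _ _ hfactor
  have hfd : (∏ i, (X - C (α i)) ^ dd i).natDegree = d := by
    simp [natDegree_prod_of_monic _ _ hfactor, hd]
  rw [sres_sub_one_eq_modByMonic hf hfd hge.le hdpos (by omega)]
  refine modByMonic_eq_of_dvd_sub_of_degree_lt (q := hermiteInterpolant α dd p g) hf ?_ ?_
  · exact prod_X_sub_C_pow_dvd_sub_of_eval_iterate_derivative_eq hα dd fun ℓ q hq =>
      (eval_iterate_derivative_hermiteInterpolant hpcond g hq).symm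
  · rw [degree_eq_natDegree hf.ne_zero, hfd]
    exact degree_hermiteInterpolant_lt hpdeg g

/-- `Sres_{d-1}(f̄, ḡ)` is the Hermite interpolation polynomial of degree `< d`
agreeing with `ḡ` and its derivatives at each `αᵢ` up to order `dᵢ - 1`:
`Sres_{d-1}(f̄, ḡ) = ∑ᵢ ∑_{j<dᵢ} (ḡ^{(j)}(αᵢ)/j!) p_{i,j}`. -/
theorem sres_dsub1 {K : Type*} [Field K] [CharZero K] {m : ℕ}
    (α : Fin m → K) (hα : Function.Injective α) (dd : Fin m → ℕ) (hdd : ∀ i, 1 ≤ dd i)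
    (d e : ℕ) (hd : d = ∑ i, dd i) (hdpos : 0 < d) (hde : d - 1 < e)
    (g : Polynomial K) (hg : g.Monic) (hge : g.natDegree = e)
    (p : (i : Fin m) → ℕ → Polynomial K)
    (hpdeg : ∀ (i : Fin m) (j : ℕ), j < dd i → (p i j).degree < (d : ℕ))
    (hpcond : ∀ (i : Fin m) (j : ℕ), j < dd i → ∀ (ℓ : Fin m) (q : ℕ), q < dd ℓ →
      Polynomial.eval (α ℓ) (Polynomial.derivative^[q] (p i j)) =
        if ℓ = i ∧ q = j then (j.factorial : K) else 0) :
    Sres (∏ i, (X - Polynomial.C (α i)) ^ (dd i)) g d e (d - 1) =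
      ∑ i, ∑ j ∈ Finset.range (dd i),
        Polynomial.C (Polynomial.eval (α i) (Polynomial.derivative^[j] g) / (j.factorial : K)) *
          p i j :=
  sres_dsub1_general α hα dd d e hd hdpos hde g hge p hpdeg hpcond
end

section
/- For $\overline{f}=(x-\alpha)^d$ and monic $\overline{g}$ of degree $e>d-1$, the $(d-1)$-st subresultant is the truncated Taylor expansion of $\overline{g}$ at $\alpha$: $\mathrm{Sres}_{d-1}((x-\alpha)^d,\overline{g})=\sum_{j=0}^{d-1}\frac{\overline{g}^{(j)}(\alpha)}{j!}(x-\alpha)^j$. -/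
open Finset Polynomial

/-!
For `t = d - 1` the matrix has a single `g`-row, below the rows of `X ^ (e - d) * f, …, f`,
and only its last column is polynomial. Expanding along that column writes `Sres` as a
combination of these `e - d + 2` polynomials with scalar cofactors; the cofactor of `g` is a
unitriangular determinant, so `Sres ≡ g` modulo a monic `f`. The coefficient of `X ^ i` in
`Sres` is the scalar determinant whose last column is replaced by the coefficients of degree
`i`; for `i ≥ d` this column repeats another one (or vanishes), so `deg Sres < d` and `Sres` is
the remainder of `g` modulo `f`. For `f = (X - α) ^ d` that remainder is the Taylor expansion
of `g` at `α` truncated at order `d`.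
-/

namespace Matrix

variable {R n : Type*} [CommRing R] [Fintype n] [DecidableEq n]

theorem det_updateCol_eq_sum_adjugate (A : Matrix n n R) (j : n) (b : n → R) :
    (A.updateCol j b).det = ∑ r, A.adjugate j r * b r := by
  rw [← cramer_apply, cramer_eq_adjugate_mulVec]
  rfl

end Matrix

namespace Polynomial

variable {R : Type*} [CommRing R]

theorem natDegree_X_sub_C_pow [Nontrivial R] (α : R) (j : ℕ) :
    ((X - C α) ^ j).natDegree = j := by
  rw [(monic_X_sub_C α).natDegree_pow, natDegree_X_sub_C, mul_one]

theorem modByMonic_eq_of_dvd_sub_of_degree_lt_s9 [Nontrivial R] {f g r : R[X]} (hf : f.Monic)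
    (h : f ∣ g - r) (hr : r.degree < f.degree) : g %ₘ f = r := by
  rw [modByMonic_eq_of_dvd_sub hf h, (modByMonic_eq_self_iff hf).2 hr]

section detPol

noncomputable def coeffMatrix {N : ℕ} (e : ℕ) (v : Fin N → R[X]) : Matrix (Fin N) (Fin N) R :=
  Matrix.of fun r c => (v r).coeff (e - c)

/-- The determinant polynomial of Basu–Pollack–Roy, in the form where the last column of the
coefficient matrix is replaced by the polynomials themselves. -/
noncomputable def detPol {n : ℕ} (e : ℕ) (v : Fin (n + 1) → R[X]) : R[X] :=
  (((coeffMatrix e v).map C).updateCol (Fin.last n) v).det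

variable {n : ℕ} (e : ℕ)

theorem detPol_eq_sum (v : Fin (n + 1) → R[X]) :
    detPol e v = ∑ r, C ((coeffMatrix e v).adjugate (Fin.last n) r) * v r := by
  rw [detPol, Matrix.det_updateCol_eq_sum_adjugate, ← RingHom.mapMatrix_apply,
    ← RingHom.map_adjugate]
  rfl

theorem coeff_detPol (v : Fin (n + 1) → R[X]) (i : ℕ) :
    (detPol e v).coeff i =
      ((coeffMatrix e v).updateCol (Fin.last n) fun r => (v r).coeff i).det := by
  simp only [detPol_eq_sum, finsetSum_coeff, coeff_C_mul, Matrix.det_updateCol_eq_sum_adjugate]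

theorem degree_detPol_lt {v : Fin (n + 1) → R[X]} (hv : ∀ r, (v r).natDegree ≤ e) :
    (detPol e v).degree < ↑(e - n + 1) := by
  refine degree_lt_iff_coeff_zero _ _ |>.2 fun i hi => ?_
  rw [coeff_detPol]
  by_cases hie : i ≤ e
  · have hne : (⟨e - i, by omega⟩ : Fin (n + 1)) ≠ Fin.last n :=
      Fin.ne_of_val_ne (by simp only [Fin.val_last]; omega)
    refine Matrix.det_zero_of_column_eq hne fun r => ?_
    rw [Matrix.updateCol_ne hne, Matrix.updateCol_self, coeffMatrix, Matrix.of_apply,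
      Nat.sub_sub_self hie]
  · exact Matrix.det_eq_zero_of_column_eq_zero (Fin.last n) fun r => by
      simp [coeff_eq_zero_of_natDegree_lt ((hv r).trans_lt (not_le.1 hie))]

theorem dvd_detPol_sub {f : R[X]} {v : Fin (n + 1) → R[X]}
    (hv : ∀ r : Fin n, f ∣ v r.castSucc) :
    f ∣ detPol e v - C (coeffMatrix e (v ∘ Fin.castSucc)).det * v (Fin.last n) := by
  have hlast : (coeffMatrix e v).adjugate (Fin.last n) (Fin.last n) =
      (coeffMatrix e (v ∘ Fin.castSucc)).det := by
    rw [Matrix.adjugate_fin_succ_eq_det_submatrix, Fin.succAbove_last, Fin.val_last,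
      (Even.add_self n).neg_one_pow, one_mul]
    rfl
  rw [detPol_eq_sum, Fin.sum_univ_castSucc, hlast, add_sub_cancel_right]
  exact Finset.dvd_sum fun r _ => dvd_mul_of_dvd_right (hv r) _

theorem det_coeffMatrix_X_pow_mul {f : R[X]} (hf : f.Monic) (k : ℕ) :
    (coeffMatrix (f.natDegree + k) fun r : Fin (k + 1) => X ^ (k - r) * f).det = 1 := by
  have hentry (r c : Fin (k + 1)) (hcr : c ≤ r) : coeffMatrix (f.natDegree + k)
      (fun r : Fin (k + 1) => X ^ (k - r) * f) r c = f.coeff (f.natDegree + r - c) := by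
    rw [Fin.le_def] at hcr
    simp only [coeffMatrix, Matrix.of_apply, coeff_X_pow_mul',
      if_pos (by omega : k - r ≤ f.natDegree + k - c)]
    congr 1
    omega
  rw [Matrix.det_of_isUpperTriangular]
  · simp [hentry _ _ le_rfl, hf.coeff_natDegree]
  · intro r c (hcr : c < r)
    rw [hentry _ _ hcr.le]
    exact coeff_eq_zero_of_natDegree_lt (by rw [Fin.lt_def] at hcr; omega)

end detPol

theorem degree_sum_C_mul_X_sub_C_pow_lt [Nontrivial R] (a : ℕ → R) (α : R) (d : ℕ) :
    (∑ j ∈ range d, C (a j) * (X - C α) ^ j).degree < (d : WithBot ℕ) := by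
  rw [← mem_degreeLT]
  refine Submodule.sum_mem _ fun j hj => ?_
  rw [← smul_eq_C_mul]
  refine Submodule.smul_mem _ _ (mem_degreeLT.2 (degree_le_natDegree.trans_lt ?_))
  rw [natDegree_X_sub_C_pow]
  exact_mod_cast mem_range.1 hj

theorem dvd_sub_sum_taylor (g : R[X]) (α : R) (d : ℕ) :
    (X - C α) ^ d ∣ g - ∑ j ∈ range d, C ((taylor α g).coeff j) * (X - C α) ^ j := by
  have hsum :
      g = ∑ j ∈ range (d + g.natDegree + 1), C ((taylor α g).coeff j) * (X - C α) ^ j := by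
    conv_lhs => rw [← sum_taylor_eq g α]
    exact sum_over_range' _ (fun n => by simp) _ (by rw [natDegree_taylor]; omega)
  nth_rw 1 [hsum]
  rw [add_assoc, Finset.sum_range_add_sub_sum_range]
  exact Finset.dvd_sum fun j _ =>
    dvd_mul_of_dvd_right (pow_add (X - C α) d j ▸ dvd_mul_right _ _) _

theorem modByMonic_X_sub_C_pow_eq_sum_taylor [Nontrivial R] (g : R[X]) (α : R) (d : ℕ) :
    g %ₘ (X - C α) ^ d = ∑ j ∈ range d, C ((taylor α g).coeff j) * (X - C α) ^ j := by
  have hmonic := (monic_X_sub_C α).pow d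
  refine modByMonic_eq_of_dvd_sub_of_degree_lt_s9 hmonic (dvd_sub_sum_taylor g α d) ?_
  rw [degree_eq_natDegree hmonic.ne_zero, natDegree_X_sub_C_pow]
  exact degree_sum_C_mul_X_sub_C_pow_lt _ α d

theorem eval_iterate_derivative_div_factorial {K : Type*} [Field K] [CharZero K] (g : K[X])
    (α : K) (j : ℕ) :
    (derivative^[j] g).eval α / j.factorial = (taylor α g).coeff j := by
  rw [taylor_coeff, ← factorial_smul_hasseDeriv, LinearMap.smul_apply, nsmul_eq_mul, eval_mul,
    eval_natCast, mul_div_cancel_left₀ _ (Nat.cast_ne_zero.2 j.factorial_ne_zero)]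

end Polynomial

theorem Sres_pred_eq_detPol {R : Type*} [CommRing R] (f g : R[X]) {d : ℕ} (hd : 0 < d) (k : ℕ) :
    Sres f g d (d + k) (d - 1) =
      detPol (d + k) (Fin.snoc (fun r : Fin (k + 1) => X ^ (k - r) * f) g) := by
  have hN : d + (d + k) - 2 * (d - 1) = k + 1 + 1 := by omega
  rw [Sres, detPol, ← Matrix.det_submatrix_equiv_self (finCongr hN.symm)]
  congr 1
  have hrows : d + k - (d - 1) = k + 1 := by omega
  have hlast : d + (d + k) - 2 * (d - 1) - 1 = k + 1 := by omega
  have hgrow : d - (d - 1) - 1 = 0 := by omega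
  refine Matrix.ext fun r c => ?_
  induction r using Fin.lastCases <;> induction c using Fin.lastCases <;>
    simp only [hrows, hlast, hgrow, coeffMatrix, Matrix.submatrix_apply, Matrix.of_apply,
      Matrix.map_apply, Matrix.updateCol_apply, finCongr_apply, Fin.ext_iff, Fin.val_cast,
      Fin.val_castSucc, Fin.val_last, Fin.snoc_castSucc, Fin.snoc_last, coeff_X_pow_mul'] <;>
    grind

theorem Sres_pred_eq_modByMonic {R : Type*} [CommRing R] [Nontrivial R] {f g : R[X]}
    (hf : f.Monic) {d k : ℕ} (hfd : f.natDegree = d) (hd : 0 < d) (hg : g.natDegree ≤ d + k) :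
    Sres f g d (d + k) (d - 1) = g %ₘ f := by
  subst hfd
  rw [Sres_pred_eq_detPol f g hd, eq_comm]
  set v : Fin (k + 1 + 1) → R[X] := Fin.snoc (fun r : Fin (k + 1) => X ^ (k - r) * f) g
  refine modByMonic_eq_of_dvd_sub_of_degree_lt_s9 hf ?_ ?_
  · have h := dvd_detPol_sub (f.natDegree + k) (f := f) (v := v) fun r => by simp [v]
    simp only [v, Fin.snoc_comp_castSucc, det_coeffMatrix_X_pow_mul hf, map_one, Fin.snoc_last,
      one_mul] at h
    exact dvd_sub_comm.1 h
  · have hv : ∀ r, (v r).natDegree ≤ f.natDegree + k := by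
      intro r
      induction r using Fin.lastCases with
      | last => simpa [v] using hg
      | cast r =>
        simp only [v, Fin.snoc_castSucc]
        exact natDegree_mul_le.trans (by rw [natDegree_X_pow]; omega)
    have h := degree_detPol_lt (f.natDegree + k) hv
    rwa [show f.natDegree + k - (k + 1) + 1 = f.natDegree by omega,
      ← degree_eq_natDegree hf.ne_zero] at h

theorem sres_dsub1_taylor_general {K : Type*} [Field K] [CharZero K]
    (α : K) (d e : ℕ) (hdpos : 0 < d) (hde : d - 1 < e)
    (g : Polynomial K) (hge : g.natDegree = e) :
    Sres ((X - Polynomial.C α) ^ d) g d e (d - 1) =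
      ∑ j ∈ Finset.range d,
        Polynomial.C (Polynomial.eval α (Polynomial.derivative^[j] g) / (j.factorial : K)) *
          (X - Polynomial.C α) ^ j := by
  obtain ⟨k, rfl⟩ : ∃ k, e = d + k := ⟨e - d, by omega⟩
  rw [Sres_pred_eq_modByMonic ((monic_X_sub_C α).pow d) (natDegree_X_sub_C_pow α d) hdpos hge.le,
    modByMonic_X_sub_C_pow_eq_sum_taylor]
  simp_rw [eval_iterate_derivative_div_factorial]

/-- `Sres_{d-1}((x-α)^d, ḡ)` is the truncated Taylor expansion of `ḡ` at `α`:
`∑_{j<d} (ḡ^{(j)}(α)/j!) (x-α)^j`. -/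
theorem sres_dsub1_taylor {K : Type*} [Field K] [CharZero K]
    (α : K) (d e : ℕ) (hdpos : 0 < d) (hde : d - 1 < e)
    (g : Polynomial K) (hg : g.Monic) (hge : g.natDegree = e) :
    Sres ((X - Polynomial.C α) ^ d) g d e (d - 1) =
      ∑ j ∈ Finset.range d,
        Polynomial.C (Polynomial.eval α (Polynomial.derivative^[j] g) / (j.factorial : K)) *
          (X - Polynomial.C α) ^ j :=
  sres_dsub1_taylor_general α d e hdpos hde g hge
end

section
/- For $p=d-1$, $q=0$: if $f$ has simple roots $\alpha_1,\ldots,\alpha_d$ and $g$ is monic of degree $e>d-1$, then $\mathrm{Sres}_{d-1}(f,g)=\sum_{i=1}^d g(\alpha_i)\prod_{j\ne i}\frac{x-\alpha_j}{\alpha_i-\alpha_j}$, i.e., $\mathrm{Sres}_{d-1}(f,g)$ is the Lagrange interpolation polynomial of degree $<d$ agreeing with $g$ at $\alpha_1,\ldots,\alpha_d$. -/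
open Finset Polynomial

/-- For `f` with simple roots `α₁,…,α_d` and monic `g` of degree `e > d - 1`:
`Sres_{d-1}(f,g) = ∑ᵢ g(αᵢ) ∏_{j≠i} (x-αⱼ)/(αᵢ-αⱼ)`, the Lagrange interpolation
polynomial of degree `< d` agreeing with `g` at `α₁,…,α_d`. -/
theorem sres_dsub1_lagrange {K : Type*} [Field K] [CharZero K] {d : ℕ}
    (α : Fin d → K) (hα : Function.Injective α) (hdpos : 0 < d)
    (e : ℕ) (hde : d - 1 < e)
    (g : Polynomial K) (hg : g.Monic) (hge : g.natDegree = e) :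
    Sres (∏ i, (X - Polynomial.C (α i))) g d e (d - 1) =
      ∑ i, Polynomial.C
          (Polynomial.eval (α i) g / ∏ j ∈ Finset.univ.erase i, (α i - α j)) *
        ∏ j ∈ Finset.univ.erase i, (X - Polynomial.C (α j)) := by
  classical
  have hed : d ≤ e := by omega
  set m := e - d with hm
  set f : Polynomial K := ∏ i, (X - Polynomial.C (α i)) with hfdef
  set L : Polynomial K := ∑ i, Polynomial.C
          (Polynomial.eval (α i) g / ∏ j ∈ Finset.univ.erase i, (α i - α j)) *
        ∏ j ∈ Finset.univ.erase i, (X - Polynomial.C (α j)) with hLdef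
  have hfm : f.Monic := monic_prod_of_monic _ _ fun i _ => monic_X_sub_C _
  have hfd : f.natDegree = d := by
    rw [hfdef, natDegree_prod _ _ fun i _ => X_sub_C_ne_zero (α i)]
    simp
  set l : Fin (m+2) := Fin.last (m+1) with hl
  set b : Fin (m+2) → Polynomial K :=
    fun r => if (r:ℕ) < m + 1 then X ^ (m - (r:ℕ)) * f else g with hb
  set N : Matrix (Fin (m+2)) (Fin (m+2)) K :=
    Matrix.of fun r c => (b r).coeff (e - (c:ℕ)) with hN
  set M : Matrix (Fin (m+2)) (Fin (m+2)) (Polynomial K) :=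
    (N.map Polynomial.C).updateCol l b with hM
  -- Step 1 : Sres = det M
  have hXf : ∀ (k j : ℕ), (X ^ k * f).coeff j = if k ≤ j then f.coeff (j - k) else 0 := by
    intro k j
    rw [mul_comm, Polynomial.coeff_mul_X_pow']
  have hstep1 : Sres f g d e (d-1) = M.det := by
    have hn : d + e - 2 * (d-1) = m + 2 := by omega
    rw [Sres, ← Matrix.det_submatrix_equiv_self (finCongr hn) M]
    congr 1
    refine Matrix.ext fun r c => ?_
    have hr : (r : ℕ) < m + 2 := by omega
    have hc : (c : ℕ) < m + 2 := by omega
    have het : e - (d-1) = m + 1 := by omega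
    have hn1 : d + e - 2*(d-1) - 1 = m + 1 := by omega
    simp only [Matrix.submatrix_apply, Matrix.of_apply, finCongr_apply, Fin.coe_cast, hM,
      Matrix.updateCol_apply, hN, hb, het, hn1, Matrix.map_apply, hl, Fin.ext_iff,
      Fin.val_last]
    split_ifs with h1 h2 h3 h4 h5 h6 h7 h8 h9 h10 h11 h12 h13 h14 <;>
        first
          | omega
          | rfl
          | (congr 1; omega)
          | skip
    all_goals try (rw [hXf]; split_ifs with h15)
    all_goals try omega
    all_goals try (congr 1 <;> omega)
    all_goals try (congr 2 <;> omega)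
    all_goals try simp
    all_goals rw [show d - (d - 1) - 1 - ((r:ℕ) - (m + 1)) = 0 by omega, pow_zero, one_mul]
  -- Step 2 : decomposition of det M by coefficients of last column
  have hbdeg : ∀ r, (b r).natDegree < e + 1 := by
    intro r
    rw [hb]
    dsimp only
    split_ifs with h
    · calc (X ^ (m - (r:ℕ)) * f).natDegree ≤ (X ^ (m - (r:ℕ)) : Polynomial K).natDegree + f.natDegree :=
            natDegree_mul_le
        _ < e + 1 := by rw [natDegree_X_pow, hfd]; omega
    · rw [hge]; omega
  have hdecomp : M.det = ∑ j ∈ Finset.range (e+1),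
      Polynomial.C ((N.updateCol l fun r => (b r).coeff j).det) * X ^ j := by
    have h1 : b = ∑ j ∈ Finset.range (e+1),
        (X ^ j : Polynomial K) • fun r => Polynomial.C ((b r).coeff j) := by
      funext r
      rw [Finset.sum_apply]
      conv_lhs => rw [(b r).as_sum_range' (e+1) (hbdeg r)]
      refine Finset.sum_congr rfl fun j _ => ?_
      rw [Pi.smul_apply, smul_eq_mul, mul_comm, Polynomial.C_mul_X_pow_eq_monomial]
    have h2 : M.det = Matrix.cramer (N.map Polynomial.C) b l := by
      rw [Matrix.cramer_apply, hM]
    rw [h2]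
    conv_lhs => rw [h1]
    rw [map_sum, Finset.sum_apply]
    refine Finset.sum_congr rfl fun j _ => ?_
    rw [LinearMap.map_smul, Pi.smul_apply, smul_eq_mul, Matrix.cramer_apply]
    have : (N.map Polynomial.C).updateCol l ((Polynomial.C (R := K)) ∘ fun r => (b r).coeff j)
        = ((N.updateCol l fun r => (b r).coeff j).map Polynomial.C) := by
      rw [Matrix.map_updateCol]
    rw [show (fun r => Polynomial.C ((b r).coeff j))
          = (Polynomial.C (R := K)) ∘ fun r => (b r).coeff j from rfl, this,
      ← RingHom.mapMatrix_apply, ← RingHom.map_det, mul_comm]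
  -- Step 3 : columns with high powers vanish
  have hvanish : ∀ j, d ≤ j → j ≤ e → (N.updateCol l fun r => (b r).coeff j).det = 0 := by
    intro j hdj hje
    set c0 : Fin (m+2) := ⟨e - j, by omega⟩ with hc0def
    have hc0v : (c0 : ℕ) = e - j := rfl
    have hc0 : c0 ≠ l := by
      refine Fin.ne_of_val_ne ?_
      rw [hc0v, hl, Fin.val_last]
      omega
    refine Matrix.det_zero_of_column_eq hc0 fun k => ?_
    rw [Matrix.updateCol_apply, Matrix.updateCol_apply, if_neg hc0, if_pos rfl, hN]
    simp only [Matrix.of_apply]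
    congr 1
    omega
  -- Step 4 : degree bound
  have hdeg : M.det.degree < (d : ℕ) := by
    rw [hdecomp]
    refine lt_of_le_of_lt (degree_sum_le _ _) ?_
    rw [Finset.sup_lt_iff (by exact_mod_cast WithBot.bot_lt_coe d)]
    intro j hj
    by_cases hjd : j < d
    · refine lt_of_le_of_lt (degree_C_mul_X_pow_le _ _) ?_
      exact_mod_cast hjd
    · rw [hvanish j (by omega) (by simpa using Nat.lt_succ_iff.mp (Finset.mem_range.mp hj)),
        map_zero, zero_mul]
      exact (by exact_mod_cast WithBot.bot_lt_coe d : (⊥ : WithBot ℕ) < (d:ℕ))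
  -- Step 5 : adjugate diagonal entry is 1, divisibility by f
  have hNadj : N.adjugate l l = 1 := by
    rw [Matrix.adjugate_apply]
    rw [Matrix.det_of_upperTriangular]
    · refine Finset.prod_eq_one fun i _ => ?_
      rw [Matrix.updateRow_apply]
      split_ifs with h
      · rw [h, Pi.single_eq_same]
      · have hi : (i : ℕ) < m + 1 := by
          rcases Fin.lt_or_lt_of_ne h with h' | h'
          · exact by omega
          · exact absurd (Fin.le_last i) (not_le.mpr (by simpa [hl] using h'))
        rw [hN]
        simp only [Matrix.of_apply, hb]
        rw [if_pos hi, hXf, if_pos (by omega),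
          show e - (i:ℕ) - (m - (i:ℕ)) = d by omega, ← hfd]
        exact hfm.coeff_natDegree
    · intro p q hpq
      simp only [id] at hpq
      rw [Matrix.updateRow_apply]
      have hq : (q : ℕ) < (p : ℕ) := hpq
      split_ifs with h
      · exact Pi.single_eq_of_ne (by intro hql; rw [h, hql] at hpq; exact lt_irrefl _ hpq) _
      · have hp : (p : ℕ) < m + 1 := by
          rcases Fin.lt_or_lt_of_ne h with h' | h'
          · exact by omega
          · exact absurd (Fin.le_last p) (not_le.mpr (by simpa [hl] using h'))
        rw [hN]
        simp only [Matrix.of_apply, hb]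
        rw [if_pos hp, hXf]
        rw [if_pos (by omega)]
        refine Polynomial.coeff_eq_zero_of_natDegree_lt ?_
        rw [hfd]
        omega
  have hdvd1 : f ∣ M.det - g := by
    have hMdet : M.det = ∑ r, (N.map Polynomial.C).adjugate l r * b r := by
      have : M.det = Matrix.cramer (N.map Polynomial.C) b l := by
        rw [Matrix.cramer_apply, hM]
      rw [this, Matrix.cramer_eq_adjugate_mulVec]
      simp [Matrix.mulVec, dotProduct]
    have hadjC : (N.map Polynomial.C).adjugate l l = 1 := by
      rw [← RingHom.mapMatrix_apply, ← RingHom.map_adjugate]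
      rw [RingHom.mapMatrix_apply, Matrix.map_apply, hNadj, map_one]
    have hbl : b l = g := by
      rw [hb]; simp [hl]
    rw [hMdet, Fin.sum_univ_castSucc, hadjC, one_mul, hbl, add_sub_cancel_right]
    refine Finset.dvd_sum fun i _ => ?_
    have hbi : b i.castSucc = X ^ (m - (i:ℕ)) * f := by
      rw [hb]
      simp only [Fin.coe_castSucc]
      rw [if_pos (by omega)]
    rw [hbi]
    exact ⟨(N.map (Polynomial.C (R:=K))).adjugate l i.castSucc * X ^ (m - (i:ℕ)), by ring⟩
  -- Step 6 : Lagrange properties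
  have hprodne : ∀ i : Fin d, (∏ j ∈ Finset.univ.erase i, (α i - α j)) ≠ 0 := by
    intro i
    refine Finset.prod_ne_zero_iff.mpr fun j hj => sub_ne_zero.mpr ?_
    intro hij
    exact (Finset.mem_erase.mp hj).1 (hα hij.symm)
  have heval : ∀ i, Polynomial.eval (α i) L = Polynomial.eval (α i) g := by
    intro i
    rw [hLdef, eval_finset_sum, Finset.sum_eq_single i]
    · rw [eval_mul, eval_C, eval_prod]
      simp only [eval_sub, eval_X, eval_C]
      rw [div_mul_cancel₀ _ (hprodne i)]
    · intro j _ hji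
      rw [eval_mul, eval_prod]
      refine mul_eq_zero_of_right _ ?_
      refine Finset.prod_eq_zero (Finset.mem_erase.mpr ⟨hji.symm, Finset.mem_univ i⟩) ?_
      simp
    · simp
  have hdvd2 : f ∣ g - L := by
    rw [hfdef]
    refine Fintype.prod_dvd_of_coprime (Polynomial.pairwise_coprime_X_sub_C hα) fun i => ?_
    rw [dvd_iff_isRoot]
    simp [IsRoot, heval i]
  have hLdeg : L.degree < (d : ℕ) := by
    rw [hLdef]
    refine lt_of_le_of_lt (degree_sum_le _ _) ?_
    rw [Finset.sup_lt_iff (by exact_mod_cast WithBot.bot_lt_coe d)]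
    intro i _
    refine lt_of_le_of_lt (degree_mul_le _ _) ?_
    have h1 : (Polynomial.C (Polynomial.eval (α i) g / ∏ j ∈ Finset.univ.erase i, (α i - α j))).degree ≤ 0 :=
      degree_C_le
    have h2n : (∏ j ∈ Finset.univ.erase i, (X - Polynomial.C (α j))).natDegree ≤ d - 1 := by
      refine le_trans (Polynomial.natDegree_prod_le _ _) ?_
      simp [natDegree_X_sub_C, Finset.card_erase_of_mem]
    have h2 : (∏ j ∈ Finset.univ.erase i, (X - Polynomial.C (α j))).degree ≤ ((d - 1 : ℕ) : WithBot ℕ) :=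
      le_trans degree_le_natDegree (by exact_mod_cast h2n)
    calc _ ≤ (0 : WithBot ℕ) + ((d-1:ℕ) : WithBot ℕ) := add_le_add h1 h2
      _ < (d : ℕ) := by
          rw [zero_add]
          exact_mod_cast (by omega : d - 1 < d)
  -- Conclusion
  have hdvd3 : f ∣ M.det - L := by
    have : M.det - L = (M.det - g) + (g - L) := by ring
    rw [this]
    exact dvd_add hdvd1 hdvd2
  have hfdeg : f.degree = (d : ℕ) := by
    rw [degree_eq_natDegree hfm.ne_zero, hfd]
  have hzero : M.det - L = 0 := by
    by_contra hne
    have hle := Polynomial.degree_le_of_dvd hdvd3 hne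
    rw [hfdeg] at hle
    have hlt : (M.det - L).degree < (d : ℕ) :=
      lt_of_le_of_lt (degree_sub_le _ _) (max_lt hdeg hLdeg)
    exact absurd (lt_of_le_of_lt hle hlt) (lt_irrefl _)
  rw [hstep1, ← sub_eq_zero]
  exact hzero
end
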